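/- Let (V_1,...,V_n) be an n-tuple of doubly non-commuting isometries on a complex Hilbert space H, and suppose T is a bounded operator on H that commutes with the projections V_i^k V_i^{*k} for all i = 1,...,n and all k ≥ 1 (equivalently, every subspace V_i^k(H) reduces T). Then for every (possibly empty) A = {i_1,...,i_l} ⊆ {1,...,n}, each summand V_{i_1}^{k_{i_1}} ⋯ V_{i_l}^{k_{i_l}}(W_A) of the orthogonal decomposition of H_A reduces T; in particular the A-wandering subspace W_A reduces T, and consequently H_A reduces T. -/

import Mathlib

/-!
Let `𝒯` be the set of operators commuting with all range projections `V_i^p V_i^{*p}`; it is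
closed under adjoints. Unimodularity of `z_{ij}` upgrades the defining relation to
`V_i V_j = z_{ij} V_j V_i` (the defect `x = V_i V_j - z_{ij} V_j V_i` satisfies `x* x = 0`), so
`V_j` commutes with the range projections of `V_i` for `i ≠ j` and shifts its own by one. Hence `𝒯`
is stable under `T ↦ V_j* T V_j`, and as `T V_j = V_j (V_j* T V_j)` for `T ∈ 𝒯`, the image under a
word in the `V_i` of a subspace invariant under all of `𝒯` is again invariant under all of `𝒯`.
The kernels `ker V_i* = ker V_i V_i*` are such subspaces, and `W_A`, the summands of `H_A` and
`H_A` itself are built from them by images under words, intersections and closed spans.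
-/

open ContinuousLinearMap

variable {H : Type*} [NormedAddCommGroup H] [InnerProductSpace ℂ H] [CompleteSpace H]

/-- The purely isometric part `H^iso`: the closed linear span of the subspaces
`S^k (ker S*)`, `k ≥ 0`. -/
noncomputable def Hiso (S : H →L[ℂ] H) : Submodule ℂ H :=
  (⨆ k : ℕ, Submodule.map ((S ^ k : H →L[ℂ] H) : H →ₗ[ℂ] H) (LinearMap.ker (adjoint S : H →ₗ[ℂ] H))).topologicalClosure

/-- The unitary part `H^uni := ⋂_{k≥0} S^k (H)`. -/
noncomputable def Huni (S : H →L[ℂ] H) : Submodule ℂ H :=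
  ⨅ k : ℕ, LinearMap.range ((S ^ k : H →L[ℂ] H) : H →ₗ[ℂ] H)

/-- A closed subspace `L` reduces `S` if it is invariant under `S` and `S*`. -/
def Reduces (S : H →L[ℂ] H) (L : Submodule ℂ H) : Prop :=
  (∀ x ∈ L, S x ∈ L) ∧ ∀ x ∈ L, adjoint S x ∈ L

/-- `S` is unitary on `L`: `S` maps `L` onto `L`. -/
def UnitaryOn (S : H →L[ℂ] H) (L : Submodule ℂ H) : Prop :=
  Submodule.map (S : H →ₗ[ℂ] H) L = L

/-- `S` is a pure isometry on the `S`-invariant subspace `L`: `{0}` is the only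
`S`-invariant closed subspace of `L` on which `S` is unitary. -/
def PureOn (S : H →L[ℂ] H) (L : Submodule ℂ H) : Prop :=
  ∀ M : Submodule ℂ H, IsClosed (M : Set H) → M ≤ L → Submodule.map (S : H →ₗ[ℂ] H) M = M → M = ⊥

/-- `P` is the orthogonal projection of `H` onto the subspace `K`. -/
def IsOrthoProj (P : H →L[ℂ] H) (K : Submodule ℂ H) : Prop :=
  ∀ x, P x ∈ K ∧ x - P x ∈ Kᗮ

/-- `(V 1, ..., V n)` is an `n`-tuple of doubly non-commuting isometries with structure
constants `z i j`: each `V i` is an isometry (`(V i)* (V i) = 1`) and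
`(V i)* (V j) = conj (z i j) • (V j) (V i)*` for all `i ≠ j`. -/
def DoublyNonCommuting {n : ℕ} (z : Fin n → Fin n → ℂ) (V : Fin n → H →L[ℂ] H) : Prop :=
  (∀ i, adjoint (V i) * V i = 1) ∧
    ∀ i j, i ≠ j →
      adjoint (V i) * V j = (starRingEnd ℂ) (z i j) • (V j * adjoint (V i))

/-- The space `H_A = ⋂_{i ∈ A} H_i^iso ∩ ⋂_{i ∈ Aᶜ} H_i^uni` (the range of the
projection `P_A`). -/
noncomputable def HA {n : ℕ} (V : Fin n → H →L[ℂ] H) (A : Finset (Fin n)) : Submodule ℂ H :=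
  (⨅ i ∈ A, Hiso (V i)) ⊓ ⨅ i ∈ Aᶜ, Huni (V i)

/-- The ordered product `V_{s 1} ^ (m (s 1)) ⋯ V_{s r} ^ (m (s r))` over a list `s` of
indices. -/
noncomputable def listProdPow {n : ℕ} (V : Fin n → H →L[ℂ] H) (s : List (Fin n))
    (m : Fin n → ℕ) : H →L[ℂ] H :=
  (s.map fun j => V j ^ m j).prod

/-- The `A`-wandering subspace
`W_A = ⋂_{m} V_{j_1}^{m_{j_1}} ⋯ V_{j_{n-l}}^{m_{j_{n-l}}} (⋂_{i ∈ A} ker (V i)*)`,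
where `j_1 < ⋯ < j_{n-l}` enumerates `Aᶜ`. -/
noncomputable def WA {n : ℕ} (V : Fin n → H →L[ℂ] H) (A : Finset (Fin n)) : Submodule ℂ H :=
  ⨅ m : Fin n → ℕ,
    Submodule.map (listProdPow V (Aᶜ.sort (· ≤ ·)) m : H →ₗ[ℂ] H)
      (⨅ i ∈ A, LinearMap.ker (adjoint (V i) : H →ₗ[ℂ] H))

/-- The summand `V_{i_1}^{k_{i_1}} ⋯ V_{i_l}^{k_{i_l}} (W_A)` of `H_A`, where
`i_1 < ⋯ < i_l` enumerates `A`. -/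
noncomputable def SummandA {n : ℕ} (V : Fin n → H →L[ℂ] H) (A : Finset (Fin n))
    (k : Fin n → ℕ) : Submodule ℂ H :=
  Submodule.map (listProdPow V (A.sort (· ≤ ·)) k : H →ₗ[ℂ] H) (WA V A)

theorem pow_mul_eq_smul_mul_pow {R A : Type*} [CommSemiring R] [Semiring A] [Algebra R A]
    {a b : A} {c : R} (h : a * b = c • (b * a)) (p : ℕ) : a ^ p * b = c ^ p • (b * a ^ p) := by
  induction p with
  | zero => simp
  | succ p ih =>
    rw [pow_succ, mul_assoc, h, mul_smul_comm, ← mul_assoc, ih, smul_mul_assoc, smul_smul,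
      ← pow_succ, mul_assoc, ← pow_succ, ← pow_succ']

theorem Commute.mul_mul_of_mul_eq_mul {A : Type*} [Semigroup A] {t q q' b b' : A}
    (hb : b * q = q' * b) (hb' : b' * q' = q * b') (ht : Commute t q') :
    Commute (b' * t * b) q :=
  calc b' * t * b * q = b' * (t * q') * b := by simp only [mul_assoc, hb]
    _ = q * (b' * t * b) := by simp only [ht.eq, ← mul_assoc, hb']

theorem list_prod_map_pow_mem_closure {M ι : Type*} [Monoid M] (V : ι → M) (s : List ι)
    (m : ι → ℕ) : (s.map fun j ↦ V j ^ m j).prod ∈ Submonoid.closure (Set.range V) :=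
  list_prod_mem fun _ hM ↦ by
    obtain ⟨j, -, rfl⟩ := List.mem_map.mp hM
    exact pow_mem (Submonoid.subset_closure (Set.mem_range_self j)) _

section Isometry

variable {A : Type*} [Monoid A] [StarMul A] {a : A}

theorem mul_pow_mul_star_pow_of_star_mul_self (ha : star a * a = 1) (p : ℕ) :
    a * (a ^ p * star a ^ p) = a ^ (p + 1) * star a ^ (p + 1) * a := by
  rw [← mul_assoc, ← pow_succ', pow_succ (star a), mul_assoc, mul_assoc, ha, mul_one]

theorem star_mul_pow_succ_mul_star_pow_succ_of_star_mul_self (ha : star a * a = 1) (p : ℕ) :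
    star a * (a ^ (p + 1) * star a ^ (p + 1)) = a ^ p * star a ^ p * star a := by
  rw [pow_succ', pow_succ (star a), ← mul_assoc, ← mul_assoc, ← mul_assoc, ha, one_mul, mul_assoc]

end Isometry

section CStarAlgebra

variable {A : Type*} [CStarAlgebra A] {a b : A} {c : ℂ}

theorem mul_eq_smul_mul_of_star_mul_eq_smul (ha : star a * a = 1) (hb : star b * b = 1)
    (h : star a * b = (starRingEnd ℂ) c • (b * star a)) (hc : ‖c‖ = 1) :
    a * b = c • (b * a) := by
  have hcc : (starRingEnd ℂ) c * c = 1 := by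
    rw [RCLike.conj_mul, hc]; norm_num
  have h' : star b * a = c • (a * star b) := by
    simpa [star_mul, star_smul] using congrArg star h
  have e₁ : star b * star a * (b * a) = (starRingEnd ℂ) c • 1 := by
    rw [mul_assoc, ← mul_assoc (star a), h, smul_mul_assoc, mul_smul_comm, mul_assoc,
      ← mul_assoc (star b), ha, hb, mul_one]
  have e₂ : star a * star b * (a * b) = c • 1 := by
    rw [mul_assoc, ← mul_assoc (star b), h', smul_mul_assoc, mul_smul_comm, mul_assoc,
      ← mul_assoc (star a), hb, ha, mul_one]
  have e₃ : star b * star a * (a * b) = 1 := by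
    rw [mul_assoc, ← mul_assoc (star a), ha, one_mul, hb]
  have e₄ : star a * star b * (b * a) = 1 := by
    rw [mul_assoc, ← mul_assoc (star b), hb, one_mul, ha]
  have hx : star (a * b - c • (b * a)) * (a * b - c • (b * a)) = 0 := by
    rw [star_sub, star_smul, star_mul, star_mul, sub_mul, mul_sub, mul_sub, smul_mul_assoc,
      smul_mul_assoc, mul_smul_comm, mul_smul_comm, e₁, e₂, e₃, e₄, smul_smul, smul_smul,
      ← starRingEnd_apply, hcc, mul_comm, hcc]
    simp
  exact sub_eq_zero.mp (CStarRing.star_mul_self_eq_zero_iff _ |>.mp hx)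

theorem commute_pow_mul_star_pow_of_mul_eq_smul (hab : a * b = c • (b * a))
    (h : star a * b = (starRingEnd ℂ) c • (b * star a)) (hc : ‖c‖ = 1) (p : ℕ) :
    Commute b (a ^ p * star a ^ p) := by
  have hcc : (starRingEnd ℂ) c * c = 1 := by
    rw [RCLike.conj_mul, hc]; norm_num
  symm
  rw [Commute, SemiconjBy, mul_assoc, pow_mul_eq_smul_mul_pow h, mul_smul_comm, ← mul_assoc,
    pow_mul_eq_smul_mul_pow hab, smul_mul_assoc, smul_smul, ← mul_pow, hcc, one_pow, one_smul,
    mul_assoc]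

end CStarAlgebra

section Commutant

variable {ι A : Type*} [Monoid A] [StarMul A]

theorem isSelfAdjoint_pow_mul_star_pow (a : A) (p : ℕ) : IsSelfAdjoint (a ^ p * star a ^ p) := by
  simpa only [star_pow] using IsSelfAdjoint.mul_star_self (a ^ p)

def rangeProjCommutant (V : ι → A) : Set A :=
  {T | ∀ i p, Commute T (V i ^ p * star (V i) ^ p)}

theorem star_mem_rangeProjCommutant {V : ι → A} {T : A} (hT : T ∈ rangeProjCommutant V) :
    star T ∈ rangeProjCommutant V := fun i p ↦ by
  simpa only [(isSelfAdjoint_pow_mul_star_pow (V i) p).star_eq] using (hT i p).star_star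

end Commutant

theorem DoublyNonCommuting.star_mul_mul_mem_rangeProjCommutant {n : ℕ} {z : Fin n → Fin n → ℂ}
    {V : Fin n → H →L[ℂ] H} (hV : DoublyNonCommuting z V) (hz : ∀ i j, i ≠ j → ‖z i j‖ = 1)
    (j : Fin n) {T : H →L[ℂ] H} (hT : T ∈ rangeProjCommutant V) :
    star (V j) * T * V j ∈ rangeProjCommutant V := by
  obtain ⟨hiso, hrel⟩ := hV
  intro i p
  by_cases hij : i = j
  · subst hij
    exact Commute.mul_mul_of_mul_eq_mul (mul_pow_mul_star_pow_of_star_mul_self (hiso i) p)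
      (star_mul_pow_succ_mul_star_pow_succ_of_star_mul_self (hiso i) p) (hT i (p + 1))
  · have hc : Commute (V j) (V i ^ p * star (V i) ^ p) :=
      commute_pow_mul_star_pow_of_mul_eq_smul
        (mul_eq_smul_mul_of_star_mul_eq_smul (hiso i) (hiso j) (hrel i j hij) (hz i j hij))
        (hrel i j hij) (hz i j hij) p
    have hc' : Commute (star (V j)) (V i ^ p * star (V i) ^ p) := by
      simpa only [(isSelfAdjoint_pow_mul_star_pow (V i) p).star_eq] using hc.star_star
    exact Commute.mul_mul_of_mul_eq_mul hc.eq hc'.eq (hT i p)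

def IsCommutantInvariant {ι : Type*} (V : ι → H →L[ℂ] H) (K : Submodule ℂ H) : Prop :=
  ∀ T ∈ rangeProjCommutant V, ∀ x ∈ K, T x ∈ K

section IsCommutantInvariant

variable {ι : Type*} {V : ι → H →L[ℂ] H}

theorem IsCommutantInvariant.reduces {K : Submodule ℂ H} (hK : IsCommutantInvariant V K)
    {T : H →L[ℂ] H} (hT : T ∈ rangeProjCommutant V) : Reduces T K :=
  ⟨hK T hT, hK (star T) (star_mem_rangeProjCommutant hT)⟩

theorem isCommutantInvariant_top : IsCommutantInvariant V ⊤ :=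
  fun _ _ _ _ ↦ Submodule.mem_top

theorem IsCommutantInvariant.inf {K L : Submodule ℂ H} (hK : IsCommutantInvariant V K)
    (hL : IsCommutantInvariant V L) : IsCommutantInvariant V (K ⊓ L) :=
  fun T hT _ hx ↦ ⟨hK T hT _ hx.1, hL T hT _ hx.2⟩

theorem isCommutantInvariant_iInf {κ : Sort*} {K : κ → Submodule ℂ H}
    (hK : ∀ k, IsCommutantInvariant V (K k)) : IsCommutantInvariant V (⨅ k, K k) :=
  fun T hT _ hx ↦ Submodule.mem_iInf _ |>.mpr fun k ↦ hK k T hT _ (Submodule.mem_iInf _ |>.mp hx k)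

theorem isCommutantInvariant_iSup {κ : Sort*} {K : κ → Submodule ℂ H}
    (hK : ∀ k, IsCommutantInvariant V (K k)) : IsCommutantInvariant V (⨆ k, K k) := by
  intro T hT x hx
  refine Submodule.iSup_induction K (motive := fun x ↦ T x ∈ ⨆ k, K k) hx ?_ ?_ ?_
  · exact fun k y hy ↦ Submodule.mem_iSup_of_mem k (hK k T hT y hy)
  · simp
  · exact fun y y' hy hy' ↦ by simpa only [map_add] using add_mem hy hy'

theorem IsCommutantInvariant.topologicalClosure {K : Submodule ℂ H}
    (hK : IsCommutantInvariant V K) : IsCommutantInvariant V K.topologicalClosure :=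
  fun T hT _ hx ↦ map_mem_closure T.continuous hx (hK T hT)

theorem isCommutantInvariant_ker_adjoint {i : ι} (hVi : adjoint (V i) * V i = 1) :
    IsCommutantInvariant V (LinearMap.ker (adjoint (V i) : H →ₗ[ℂ] H)) := by
  intro T hT x hx
  have hQ := (hT i 1).eq
  simp only [pow_one] at hQ
  simp only [LinearMap.mem_ker, ContinuousLinearMap.coe_coe] at hx ⊢
  calc adjoint (V i) (T x) = (adjoint (V i) * V i * star (V i) * T) x := by
        rw [hVi, one_mul]; rfl
    _ = 0 := by
        rw [mul_assoc, mul_assoc, ← mul_assoc _ _ T, ← hQ]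
        simp [star_eq_adjoint, hx]

end IsCommutantInvariant

section DoublyNonCommuting

variable {n : ℕ} {z : Fin n → Fin n → ℂ} {V : Fin n → H →L[ℂ] H}

theorem IsCommutantInvariant.map_of_mem_closure (hV : DoublyNonCommuting z V)
    (hz : ∀ i j, i ≠ j → ‖z i j‖ = 1) {M : H →L[ℂ] H} (hM : M ∈ Submonoid.closure (Set.range V)) :
    ∀ {K : Submodule ℂ H}, IsCommutantInvariant V K →
      IsCommutantInvariant V (K.map (M : H →ₗ[ℂ] H)) := by
  induction hM using Submonoid.closure_induction with
  | mem _ hM =>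
    obtain ⟨j, rfl⟩ := hM
    intro K hK T hT x hx
    obtain ⟨w, hw, rfl⟩ := Submodule.mem_map.mp hx
    have hTV : T * V j = V j * (star (V j) * T * V j) := by
      have hQ := (hT j 1).eq
      simp only [pow_one] at hQ
      have hiso : star (V j) * V j = 1 := hV.1 j
      calc T * V j = T * (V j * star (V j)) * V j := by rw [mul_assoc, mul_assoc, hiso, mul_one]
        _ = V j * (star (V j) * T * V j) := by rw [hQ]; simp only [mul_assoc]
    refine Submodule.mem_map.mpr ⟨_, hK _ (hV.star_mul_mul_mem_rangeProjCommutant hz j hT) w hw, ?_⟩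
    change (V j * (star (V j) * T * V j)) w = (T * V j) w
    rw [hTV]
  | one =>
    intro K hK
    rwa [show ((1 : H →L[ℂ] H) : H →ₗ[ℂ] H) = LinearMap.id from rfl, Submodule.map_id]
  | mul M M' _ _ ihM ihM' =>
    intro K hK
    rw [show ((M * M' : H →L[ℂ] H) : H →ₗ[ℂ] H) = (M : H →ₗ[ℂ] H) ∘ₗ (M' : H →ₗ[ℂ] H) from rfl,
      Submodule.map_comp]
    exact ihM (ihM' hK)

theorem DoublyNonCommuting.isCommutantInvariant_WA (hV : DoublyNonCommuting z V)
    (hz : ∀ i j, i ≠ j → ‖z i j‖ = 1) (A : Finset (Fin n)) : IsCommutantInvariant V (WA V A) :=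
  isCommutantInvariant_iInf fun m ↦
    IsCommutantInvariant.map_of_mem_closure hV hz (list_prod_map_pow_mem_closure V _ m) <|
      isCommutantInvariant_iInf fun i ↦ isCommutantInvariant_iInf fun _ ↦
        isCommutantInvariant_ker_adjoint (hV.1 i)

theorem DoublyNonCommuting.isCommutantInvariant_HA (hV : DoublyNonCommuting z V)
    (hz : ∀ i j, i ≠ j → ‖z i j‖ = 1) (A : Finset (Fin n)) : IsCommutantInvariant V (HA V A) := by
  have hpow (i : Fin n) (k : ℕ) : V i ^ k ∈ Submonoid.closure (Set.range V) :=
    pow_mem (Submonoid.subset_closure (Set.mem_range_self i)) k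
  refine .inf (isCommutantInvariant_iInf fun i ↦ isCommutantInvariant_iInf fun _ ↦ ?_)
    (isCommutantInvariant_iInf fun i ↦ isCommutantInvariant_iInf fun _ ↦ ?_)
  · exact IsCommutantInvariant.topologicalClosure <| isCommutantInvariant_iSup fun k ↦
      .map_of_mem_closure hV hz (hpow i k) (isCommutantInvariant_ker_adjoint (hV.1 i))
  · exact isCommutantInvariant_iInf fun k ↦ by
      simpa only [Submodule.map_top] using
        IsCommutantInvariant.map_of_mem_closure hV hz (hpow i k) isCommutantInvariant_top

end DoublyNonCommuting

theorem statement15_general {n : ℕ} (z : Fin n → Fin n → ℂ)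
    (hz1 : ∀ i j, i ≠ j → ‖z i j‖ = 1)
    (V : Fin n → H →L[ℂ] H) (hV : DoublyNonCommuting z V)
    (T : H →L[ℂ] H)
    (hT : ∀ i, ∀ k : ℕ, 1 ≤ k → Commute T (V i ^ k * adjoint (V i) ^ k)) :
    ∀ A : Finset (Fin n),
      (∀ k : Fin n → ℕ, Reduces T (SummandA V A k)) ∧
      Reduces T (WA V A) ∧ Reduces T (HA V A) := by
  have hTV : T ∈ rangeProjCommutant V := fun i p ↦ by
    rcases Nat.eq_zero_or_pos p with rfl | hp
    · simp
    · exact hT i p hp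
  intro A
  have hWA := hV.isCommutantInvariant_WA hz1 A
  exact ⟨fun k ↦ (hWA.map_of_mem_closure hV hz1 (list_prod_map_pow_mem_closure V _ k)).reduces hTV,
    hWA.reduces hTV, (hV.isCommutantInvariant_HA hz1 A).reduces hTV⟩

theorem statement15 {n : ℕ} (hn : 1 ≤ n) (z : Fin n → Fin n → ℂ)
    (hz1 : ∀ i j, i ≠ j → ‖z i j‖ = 1)
    (hz2 : ∀ i j, i ≠ j → z j i = (starRingEnd ℂ) (z i j))
    (V : Fin n → H →L[ℂ] H) (hV : DoublyNonCommuting z V)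
    (T : H →L[ℂ] H)
    (hT : ∀ i, ∀ k : ℕ, 1 ≤ k → Commute T (V i ^ k * adjoint (V i) ^ k)) :
    ∀ A : Finset (Fin n),
      (∀ k : Fin n → ℕ, Reduces T (SummandA V A k)) ∧
      Reduces T (WA V A) ∧ Reduces T (HA V A) :=
  statement15_general z hz1 V hV T hT
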